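/- Let d ≥ 2 be an integer, let v : {0,1}^d → ℝ be a coalitional game with Shapley values φ(v) ∈ ℝ^d, and let φ ∈ ℝ^d satisfy the efficiency constraint 1^⊤φ = v(1) − v(0). Then ‖φ − φ(v)‖₂² ≤ 2·H_{d−1}·(h_v(φ) − h_v(φ(v))). -/

import Mathlib

open scoped BigOperators

/-- The `n`-th harmonic number `H_n = ∑_{k=1}^n 1/k`. -/
noncomputable def harm (n : ℕ) : ℝ := ∑ k ∈ Finset.Icc 1 n, (1 : ℝ) / k

/-- Normalizing constant `Q = ∑_{k=1}^{d-1} (d-1)/(k(d-k))` of the Shapley kernel. -/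
noncomputable def shapQ (d : ℕ) : ℝ :=
  ∑ k ∈ Finset.Icc 1 (d - 1), ((d : ℝ) - 1) / ((k : ℝ) * ((d : ℝ) - (k : ℝ)))

/-- Shapley kernel distribution on subsets `s ⊆ {1,…,d}`. -/
noncomputable def pSh (d : ℕ) (s : Finset (Fin d)) : ℝ :=
  if 0 < s.card ∧ s.card < d then
    (((d : ℝ) - 1) /
      ((Nat.choose d s.card : ℝ) * (s.card : ℝ) * ((d : ℝ) - (s.card : ℝ)))) / shapQ d
  else 0

/-- Shapley regression loss `h_v(φ) = E_{s∼p_Sh}[(v(s) - v(0) - sᵀφ)²]`. -/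
noncomputable def hLoss (d : ℕ) (v : Finset (Fin d) → ℝ)
    (φ : EuclideanSpace ℝ (Fin d)) : ℝ :=
  ∑ s : Finset (Fin d), pSh d s * (v s - v ∅ - ∑ i ∈ s, φ i) ^ 2

/-- Shapley values `φ_i(v) = (1/d) ∑_{s : i ∉ s} C(d-1, |s|)⁻¹ (v(s+e_i) - v(s))`. -/
noncomputable def shapleyValue (d : ℕ) (v : Finset (Fin d) → ℝ) :
    EuclideanSpace ℝ (Fin d) :=
  WithLp.toLp 2 fun i => (1 / (d : ℝ)) *
    ∑ s ∈ Finset.univ.filter (fun s : Finset (Fin d) => i ∉ s),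
      ((Nat.choose (d - 1) s.card : ℝ))⁻¹ * (v (insert i s) - v s)

/-!
Write `δ = φ - φ(v)`; by efficiency of the Shapley value, `∑ i, δ i = 0`. Since the loss
is quadratic, `h_v(φ) - h_v(φ(v)) = E[(sᵀδ)²] - 2 E[r(s) sᵀδ]` with
`r(s) = v(s) - v(0) - sᵀφ(v)`. The key identity is that the kernel weight of a coalition
of size `k + 1` is `(2 H_{d-1})⁻¹` times the sum of the Shapley weights
`w_k = 1 / (d C(d-1, k))` of sizes `k` and `k + 1`. Splitting coalitions according to two
players `i ≠ j`, it gives `E[s sᵀ] = c 1 1ᵀ + (2 H_{d-1})⁻¹ I`, so the quadratic term is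
`‖δ‖² / (2 H_{d-1})`; together with the classical formula
`φ_i - φ_j = ∑_u (w_{|u|} + w_{|u|+1}) (v(u+i) - v(u+j))` it also shows that all
coordinates of `E[r(s) s]` are equal, so the linear term vanishes. Hence the bound holds
with equality.
-/

open Finset

namespace Finset

variable {α M : Type*} [DecidableEq α] [AddCommMonoid M]

theorem sum_powerset_eq_sum_powerset_erase {A : Finset α} {j : α} (hj : j ∈ A)
    (f : Finset α → M) :
    ∑ t ∈ A.powerset, f t = ∑ u ∈ (A.erase j).powerset, (f u + f (insert j u)) := by
  conv_lhs => rw [← insert_erase hj]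
  rw [sum_powerset_insert (notMem_erase j A), sum_add_distrib]

theorem notMem_of_mem_powerset_erase {A u : Finset α} {j : α}
    (hu : u ∈ (A.erase j).powerset) : j ∉ u :=
  fun h => notMem_erase j A (mem_powerset.1 hu h)

variable [Fintype α]

theorem sum_ite_mem_eq_sum_powerset_erase (i : α) (f : Finset α → M) :
    ∑ s, (if i ∈ s then f s else 0) = ∑ t ∈ (univ.erase i).powerset, f (insert i t) := by
  rw [← powerset_univ, sum_powerset_eq_sum_powerset_erase (mem_univ i)]
  refine sum_congr rfl fun t ht => ?_
  simp [notMem_of_mem_powerset_erase ht]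

theorem sum_ite_notMem_eq_sum_powerset_erase (i : α) (f : Finset α → M) :
    ∑ s, (if i ∈ s then 0 else f s) = ∑ t ∈ (univ.erase i).powerset, f t := by
  rw [← powerset_univ, sum_powerset_eq_sum_powerset_erase (mem_univ i)]
  refine sum_congr rfl fun t ht => ?_
  simp [notMem_of_mem_powerset_erase ht]

theorem sum_ite_mem_eq_sum_powerset_erase_erase {i j : α} (hij : i ≠ j) (f : Finset α → M) :
    ∑ s, (if i ∈ s then f s else 0) =
      ∑ u ∈ ((univ.erase i).erase j).powerset,
        (f (insert i u) + f (insert i (insert j u))) := by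
  rw [sum_ite_mem_eq_sum_powerset_erase,
    sum_powerset_eq_sum_powerset_erase (mem_erase.2 ⟨hij.symm, mem_univ j⟩)]

theorem sum_mul_sum_mem {R : Type*} [CommSemiring R] (F : Finset α → R) (x : α → R) :
    ∑ s, F s * ∑ i ∈ s, x i = ∑ i, x i * ∑ s, if i ∈ s then F s else 0 := by
  simp_rw [mul_sum, mul_ite, mul_zero, ← sum_filter]
  rw [sum_comm' (t' := univ) (s' := fun i => univ.filter (i ∈ ·)) (by simp)]
  simp_rw [mul_comm]

end Finset

theorem harm_pos {n : ℕ} (hn : 1 ≤ n) : 0 < harm n :=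
  sum_pos (fun k hk => one_div_pos.2 (Nat.cast_pos.2 (mem_Icc.1 hk).1)) ⟨1, by simp [hn]⟩

theorem sum_Icc_one_div_sub_eq_harm (d : ℕ) :
    ∑ k ∈ Icc 1 (d - 1), 1 / ((d : ℝ) - k) = harm (d - 1) := by
  refine sum_nbij' (d - ·) (d - ·) ?_ ?_ ?_ ?_ ?_ <;> intro k hk <;>
    simp only [mem_Icc] at hk ⊢ <;> first | omega | rw [Nat.cast_sub (by omega)]

theorem shapQ_eq (d : ℕ) : shapQ d = 2 * harm (d - 1) * (d - 1) / d := by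
  have hterm : ∀ k ∈ Icc 1 (d - 1), ((d : ℝ) - 1) / (k * (d - k)) =
      (d - 1) / d * (1 / k + 1 / (d - k)) := by
    intro k hk
    obtain ⟨hk1, hkd⟩ := mem_Icc.1 hk
    have hdk : (d : ℝ) - k ≠ 0 := sub_ne_zero.2 (by exact_mod_cast (show d ≠ k by omega))
    have hk0 : (k : ℝ) ≠ 0 := by exact_mod_cast (show k ≠ 0 by omega)
    have hd0 : (d : ℝ) ≠ 0 := by exact_mod_cast (show d ≠ 0 by omega)
    field_simp
    ring
  rw [shapQ, sum_congr rfl hterm, ← mul_sum, sum_add_distrib, sum_Icc_one_div_sub_eq_harm]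
  unfold harm
  ring

noncomputable def kernelWeight (d k : ℕ) : ℝ :=
  if 0 < k ∧ k < d then
    (((d : ℝ) - 1) / ((Nat.choose d k : ℝ) * (k : ℝ) * ((d : ℝ) - (k : ℝ)))) / shapQ d
  else 0

theorem pSh_eq_kernelWeight (d : ℕ) (s : Finset (Fin d)) : pSh d s = kernelWeight d s.card :=
  rfl

noncomputable def shapleyWeight (d k : ℕ) : ℝ := ((d : ℝ) * (d - 1).choose k)⁻¹

theorem kernelWeight_add_one {d k : ℕ} (hk : k + 1 < d) :
    kernelWeight d (k + 1) =
      (2 * harm (d - 1))⁻¹ * (shapleyWeight d k + shapleyWeight d (k + 1)) := by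
  obtain ⟨n, rfl⟩ : ∃ n, d = n + 1 := ⟨d - 1, by omega⟩
  have hA : ((n + 1 : ℕ) : ℝ) * n.choose k = (n + 1).choose (k + 1) * (k + 1) := by
    exact_mod_cast Nat.add_one_mul_choose_eq n k
  have hB : ((n + 1 : ℕ) : ℝ) * n.choose (k + 1) = (n + 1).choose (k + 1) * (n - k) := by
    have h := Nat.choose_mul_succ_eq n (k + 1)
    rw [show n + 1 - (k + 1) = n - k by omega] at h
    rw [mul_comm, ← Nat.cast_sub (by omega : k ≤ n)]
    exact_mod_cast h
  have hH : harm n ≠ 0 := (harm_pos (by omega)).ne'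
  have hC : ((n + 1).choose (k + 1) : ℝ) ≠ 0 := by
    exact_mod_cast (Nat.choose_pos (by omega)).ne'
  have hnk : (n : ℝ) - k ≠ 0 := sub_ne_zero.2 (by exact_mod_cast (show n ≠ k by omega))
  have hn : (n : ℝ) ≠ 0 := by exact_mod_cast (show n ≠ 0 by omega)
  rw [kernelWeight, if_pos ⟨by omega, hk⟩, shapQ_eq, shapleyWeight, shapleyWeight,
    Nat.add_sub_cancel, hA, hB]
  push_cast
  rw [show (n : ℝ) + 1 - (k + 1) = n - k by ring, show (n : ℝ) + 1 - 1 = n by ring]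
  field_simp
  ring

theorem sum_powerset_shapleyWeight {α : Type*} {d : ℕ} {B : Finset α} (hB : B.card + 1 = d) :
    ∑ t ∈ B.powerset, shapleyWeight d t.card = 1 := by
  have hd : (d : ℝ) ≠ 0 := by exact_mod_cast (show d ≠ 0 by omega)
  rw [sum_powerset_apply_card, hB, show B.card = d - 1 by omega]
  have hterm : ∀ m ∈ range d, (d - 1).choose m • shapleyWeight d m = 1 / d := by
    intro m hm
    have : ((d - 1).choose m : ℝ) ≠ 0 := by
      exact_mod_cast (Nat.choose_pos (by simp at hm; omega)).ne'
    rw [nsmul_eq_mul, shapleyWeight]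
    field_simp
  rw [sum_congr rfl hterm, sum_const, card_range, nsmul_eq_mul]
  field_simp

section FixedDimension

variable {d : ℕ}

theorem shapleyValue_apply (v : Finset (Fin d) → ℝ) (i : Fin d) :
    shapleyValue d v i =
      ∑ t ∈ (univ.erase i).powerset, shapleyWeight d t.card * (v (insert i t) - v t) := by
  rw [← sum_ite_notMem_eq_sum_powerset_erase, shapleyValue, PiLp.toLp_apply, sum_filter, mul_sum]
  refine sum_congr rfl fun s _ => ?_
  split_ifs <;> simp [shapleyWeight]
  ring

theorem mul_shapleyWeight_pred_sub_mul_shapleyWeight {k : ℕ} (hd : 0 < d) (hk : k ≤ d) :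
    k * shapleyWeight d (k - 1) - (d - k) * shapleyWeight d k =
      (if k = d then 1 else 0) - (if k = 0 then 1 else 0) := by
  have hd0 : (d : ℝ) ≠ 0 := by exact_mod_cast hd.ne'
  rcases Nat.eq_zero_or_pos k with rfl | hk0
  · simp [shapleyWeight, hd.ne, hd0]
  rcases hk.eq_or_lt with rfl | hkd
  · simp [shapleyWeight, hk0.ne', hd0]
  obtain ⟨j, rfl⟩ : ∃ j, k = j + 1 := ⟨k - 1, by omega⟩
  have h := Nat.choose_succ_right_eq (d - 1) j
  rw [show d - 1 - j = d - (j + 1) by omega] at h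
  have hcast : (((d - 1).choose (j + 1) * (j + 1) : ℕ) : ℝ) =
      ((d - 1).choose j * (d - (j + 1)) : ℕ) := by rw [h]
  push_cast [Nat.cast_sub hk] at hcast
  have ha : ((d - 1).choose j : ℝ) ≠ 0 := by exact_mod_cast (Nat.choose_pos (by omega)).ne'
  have hb : ((d - 1).choose (j + 1) : ℝ) ≠ 0 := by
    exact_mod_cast (Nat.choose_pos (by omega)).ne'
  simp only [shapleyWeight, Nat.add_sub_cancel, hkd.ne, if_false, Nat.succ_ne_zero]
  field_simp
  push_cast
  linear_combination hcast

theorem sum_shapleyValue (hd : 0 < d) (v : Finset (Fin d) → ℝ) :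
    ∑ i, shapleyValue d v i = v univ - v ∅ := by
  have hjoin : ∀ i, shapleyValue d v i =
      (∑ s, if i ∈ s then shapleyWeight d (s.card - 1) * v s else 0) -
        ∑ s, if i ∈ s then 0 else shapleyWeight d s.card * v s := by
    intro i
    rw [shapleyValue_apply, sum_ite_mem_eq_sum_powerset_erase,
      sum_ite_notMem_eq_sum_powerset_erase, ← sum_sub_distrib]
    refine sum_congr rfl fun t ht => ?_
    rw [card_insert_of_notMem (notMem_of_mem_powerset_erase ht), Nat.add_sub_cancel, mul_sub]
  have hcoeff : ∀ s : Finset (Fin d),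
      (∑ i, if i ∈ s then shapleyWeight d (s.card - 1) * v s else 0) -
        (∑ i, if i ∈ s then 0 else shapleyWeight d s.card * v s) =
      ((if s.card = d then 1 else 0) - (if s.card = 0 then 1 else 0)) * v s := by
    intro s
    have hk : s.card ≤ d := by simpa using card_le_univ s
    rw [← mul_shapleyWeight_pred_sub_mul_shapleyWeight hd hk]
    simp [sum_ite, filter_not, card_sdiff_of_subset, Nat.cast_sub hk]
    ring
  simp_rw [hjoin, sum_sub_distrib]
  rw [sum_comm, sum_comm (f := fun i s => if i ∈ s then 0 else _), ← sum_sub_distrib,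
    sum_congr rfl fun s _ => hcoeff s]
  have huniv : ∀ s : Finset (Fin d), s.card = d ↔ s = univ := by
    simpa using card_eq_iff_eq_univ (α := Fin d)
  simp [sub_mul, sum_sub_distrib, huniv]

theorem card_erase_erase_univ {i j : Fin d} (hij : i ≠ j) :
    ((univ.erase i).erase j).card = d - 2 := by
  rw [card_erase_of_mem (mem_erase.2 ⟨hij.symm, mem_univ j⟩), card_erase_of_mem (mem_univ i),
    card_univ, Fintype.card_fin, Nat.sub_sub]

theorem notMem_and_notMem_of_mem_powerset_erase_erase {i j : Fin d} {u : Finset (Fin d)}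
    (hu : u ∈ ((univ.erase i).erase j).powerset) : i ∉ u ∧ j ∉ u :=
  ⟨notMem_of_mem_powerset_erase (erase_right_comm (s := (univ : Finset (Fin d))) ▸ hu),
    notMem_of_mem_powerset_erase hu⟩

theorem kernelWeight_card_add_one {i j : Fin d} (hij : i ≠ j) {u : Finset (Fin d)}
    (hu : u ∈ ((univ.erase i).erase j).powerset) :
    kernelWeight d (u.card + 1) =
      (2 * harm (d - 1))⁻¹ * (shapleyWeight d u.card + shapleyWeight d (u.card + 1)) := by
  have hcard := card_le_card (mem_powerset.1 hu)
  rw [card_erase_erase_univ hij] at hcard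
  exact kernelWeight_add_one (by omega)

theorem card_insert_insert_of_mem_powerset_erase_erase {i j : Fin d} (hij : i ≠ j)
    {u : Finset (Fin d)} (hu : u ∈ ((univ.erase i).erase j).powerset) :
    (insert i (insert j u)).card = u.card + 2 := by
  obtain ⟨hi, hj⟩ := notMem_and_notMem_of_mem_powerset_erase_erase hu
  rw [card_insert_of_notMem (by simp [hij, hi]), card_insert_of_notMem hj]

theorem shapleyValue_sub_shapleyValue (v : Finset (Fin d) → ℝ) {i j : Fin d} (hij : i ≠ j) :
    shapleyValue d v i - shapleyValue d v j =
      ∑ u ∈ ((univ.erase i).erase j).powerset,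
        (shapleyWeight d u.card + shapleyWeight d (u.card + 1)) *
          (v (insert i u) - v (insert j u)) := by
  rw [shapleyValue_apply, shapleyValue_apply,
    sum_powerset_eq_sum_powerset_erase (mem_erase.2 ⟨hij.symm, mem_univ j⟩),
    sum_powerset_eq_sum_powerset_erase (mem_erase.2 ⟨hij, mem_univ i⟩),
    erase_right_comm (a := j), ← sum_sub_distrib]
  refine sum_congr rfl fun u hu => ?_
  obtain ⟨hi, hj⟩ := notMem_and_notMem_of_mem_powerset_erase_erase hu
  rw [card_insert_of_notMem hi, card_insert_of_notMem hj, insert_comm j i]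
  ring

theorem sum_powerset_erase_erase_kernelWeight {i j : Fin d} (hij : i ≠ j) :
    ∑ u ∈ ((univ.erase i).erase j).powerset, kernelWeight d (u.card + 1) =
      (2 * harm (d - 1))⁻¹ := by
  have hsum : ∑ u ∈ ((univ.erase i).erase j).powerset,
      (shapleyWeight d u.card + shapleyWeight d (u.card + 1)) = 1 := by
    rw [← sum_powerset_shapleyWeight (d := d) (B := univ.erase i)
      (by simp [card_erase_of_mem]; omega),
      sum_powerset_eq_sum_powerset_erase (mem_erase.2 ⟨hij.symm, mem_univ j⟩)]
    refine sum_congr rfl fun u hu => ?_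
    rw [card_insert_of_notMem (notMem_of_mem_powerset_erase hu)]
  rw [sum_congr rfl fun u hu => kernelWeight_card_add_one hij hu, ← mul_sum, hsum, mul_one]

noncomputable def shapleyResidual (d : ℕ) (v : Finset (Fin d) → ℝ) (s : Finset (Fin d)) :
    ℝ :=
  v s - v ∅ - ∑ i ∈ s, shapleyValue d v i

theorem sum_ite_mem_pSh_mul_shapleyResidual (v : Finset (Fin d) → ℝ) (i j : Fin d) :
    (∑ s, if i ∈ s then pSh d s * shapleyResidual d v s else 0) =
      ∑ s, if j ∈ s then pSh d s * shapleyResidual d v s else 0 := by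
  rcases eq_or_ne i j with rfl | hij
  · rfl
  rw [← sub_eq_zero, sum_ite_mem_eq_sum_powerset_erase_erase hij,
    sum_ite_mem_eq_sum_powerset_erase_erase hij.symm, erase_right_comm (a := j),
    ← sum_sub_distrib]
  -- the coalitions containing both players contribute equally to both sides
  have hterm : ∀ u ∈ ((univ.erase i).erase j).powerset,
      pSh d (insert i u) * shapleyResidual d v (insert i u) +
          pSh d (insert i (insert j u)) * shapleyResidual d v (insert i (insert j u)) -
        (pSh d (insert j u) * shapleyResidual d v (insert j u) +
          pSh d (insert j (insert i u)) * shapleyResidual d v (insert j (insert i u))) =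
      kernelWeight d (u.card + 1) * (v (insert i u) - v (insert j u)) -
        (shapleyValue d v i - shapleyValue d v j) * kernelWeight d (u.card + 1) := by
    intro u hu
    obtain ⟨hi, hj⟩ := notMem_and_notMem_of_mem_powerset_erase_erase hu
    simp only [pSh_eq_kernelWeight, shapleyResidual, card_insert_of_notMem hi,
      card_insert_of_notMem hj, sum_insert hi, sum_insert hj, insert_comm j i]
    ring
  rw [sum_congr rfl hterm, sum_sub_distrib, ← mul_sum,
    sum_powerset_erase_erase_kernelWeight hij,
    sum_congr rfl fun u hu => by rw [kernelWeight_card_add_one hij hu, mul_assoc],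
    ← mul_sum, ← shapleyValue_sub_shapleyValue v hij]
  ring

noncomputable def pairInclusionWeight (d : ℕ) : ℝ :=
  ∑ k ∈ range (d - 2 + 1), ((d - 2).choose k : ℝ) * kernelWeight d (k + 2)

theorem sum_powerset_erase_erase_kernelWeight_add_two {i j : Fin d} (hij : i ≠ j) :
    ∑ u ∈ ((univ.erase i).erase j).powerset, kernelWeight d (u.card + 2) =
      pairInclusionWeight d := by
  rw [sum_powerset_apply_card (fun k => kernelWeight d (k + 2)), card_erase_erase_univ hij,
    pairInclusionWeight]
  simp_rw [nsmul_eq_mul]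

theorem sum_ite_mem_ite_mem_pSh (hd : 2 ≤ d) (i j : Fin d) :
    (∑ s, if i ∈ s then (if j ∈ s then pSh d s else 0) else 0) =
      pairInclusionWeight d + if i = j then (2 * harm (d - 1))⁻¹ else 0 := by
  rcases eq_or_ne i j with rfl | hij
  · obtain ⟨j, hij⟩ := Fintype.exists_ne_of_one_lt_card (by rw [Fintype.card_fin]; omega) i
    simp only [if_true]
    rw [sum_ite_mem_eq_sum_powerset_erase_erase hij.symm, sum_add_distrib,
      ← sum_powerset_erase_erase_kernelWeight_add_two hij.symm,
      ← sum_powerset_erase_erase_kernelWeight hij.symm, add_comm]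
    congr 1 <;> refine sum_congr rfl fun u hu => ?_
    · simp [pSh_eq_kernelWeight, card_insert_insert_of_mem_powerset_erase_erase hij.symm hu]
    · simp [pSh_eq_kernelWeight, (notMem_and_notMem_of_mem_powerset_erase_erase hu).1]
  · rw [if_neg hij, add_zero, sum_ite_mem_eq_sum_powerset_erase_erase hij,
      ← sum_powerset_erase_erase_kernelWeight_add_two hij]
    refine sum_congr rfl fun u hu => ?_
    simp [pSh_eq_kernelWeight, (notMem_and_notMem_of_mem_powerset_erase_erase hu).2, hij.symm,
      card_insert_insert_of_mem_powerset_erase_erase hij hu]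

theorem sum_pSh_mul_sq_sum (hd : 2 ≤ d) (δ : Fin d → ℝ) (hδ : ∑ i, δ i = 0) :
    ∑ s, pSh d s * (∑ i ∈ s, δ i) ^ 2 = (2 * harm (d - 1))⁻¹ * ∑ i, δ i ^ 2 :=
  calc ∑ s, pSh d s * (∑ i ∈ s, δ i) ^ 2
      = ∑ s, (pSh d s * ∑ j ∈ s, δ j) * ∑ i ∈ s, δ i := by simp_rw [sq, mul_assoc]
    _ = ∑ i, δ i * ∑ j, δ j *
          ∑ s, if j ∈ s then (if i ∈ s then pSh d s else 0) else 0 := by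
      simp_rw [sum_mul_sum_mem, ← ite_zero_mul, sum_mul_sum_mem]
    _ = ∑ i, δ i * ∑ j, δ j *
          (pairInclusionWeight d + if j = i then (2 * harm (d - 1))⁻¹ else 0) := by
      simp_rw [sum_ite_mem_ite_mem_pSh hd]
    _ = (2 * harm (d - 1))⁻¹ * ∑ i, δ i ^ 2 := by
      simp only [mul_add, sum_add_distrib, ← sum_mul, hδ, zero_mul, zero_add, mul_ite, mul_zero,
        sum_ite_eq', mem_univ, if_true, mul_sum]
      exact sum_congr rfl fun i _ => by ring

theorem sum_pSh_mul_shapleyResidual_mul_sum (hd : 0 < d) (v : Finset (Fin d) → ℝ)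
    (δ : Fin d → ℝ) (hδ : ∑ i, δ i = 0) :
    ∑ s, pSh d s * shapleyResidual d v s * ∑ i ∈ s, δ i = 0 := by
  rw [sum_mul_sum_mem]
  simp_rw [sum_ite_mem_pSh_mul_shapleyResidual v _ ⟨0, hd⟩, ← sum_mul, hδ, zero_mul]

theorem hLoss_sub_hLoss_shapleyValue (hd : 2 ≤ d) (v : Finset (Fin d) → ℝ)
    (φ : EuclideanSpace ℝ (Fin d)) (heff : ∑ i, φ i = v univ - v ∅) :
    hLoss d v φ - hLoss d v (shapleyValue d v) =
      (2 * harm (d - 1))⁻¹ * ‖φ - shapleyValue d v‖ ^ 2 := by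
  set δ := φ - shapleyValue d v
  have hδ : ∑ i, δ i = 0 := by
    simp [δ, sum_sub_distrib, heff, sum_shapleyValue (by omega : 0 < d)]
  have hterm : ∀ s, pSh d s * (v s - v ∅ - ∑ i ∈ s, φ i) ^ 2 -
      pSh d s * (v s - v ∅ - ∑ i ∈ s, shapleyValue d v i) ^ 2 =
      pSh d s * (∑ i ∈ s, δ i) ^ 2 -
        2 * (pSh d s * shapleyResidual d v s * ∑ i ∈ s, δ i) := by
    intro s
    simp only [δ, shapleyResidual, PiLp.sub_apply, sum_sub_distrib]
    ring
  rw [hLoss, hLoss, ← sum_sub_distrib, sum_congr rfl fun s _ => hterm s, sum_sub_distrib,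
    ← mul_sum, sum_pSh_mul_shapleyResidual_mul_sum (by omega) v δ hδ,
    sum_pSh_mul_sq_sum hd δ hδ, EuclideanSpace.real_norm_sq_eq]
  ring

end FixedDimension

/-- If `φ` satisfies the efficiency constraint `1ᵀφ = v(1) - v(0)`, then
`‖φ - φ(v)‖² ≤ 2 H_{d-1} (h_v(φ) - h_v(φ(v)))`. -/
theorem shapley_value_estimation_bound (d : ℕ) (hd : 2 ≤ d) (v : Finset (Fin d) → ℝ)
    (φ : EuclideanSpace ℝ (Fin d))
    (heff : ∑ i, φ i = v Finset.univ - v ∅) :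
    ‖φ - shapleyValue d v‖ ^ 2 ≤
      2 * harm (d - 1) * (hLoss d v φ - hLoss d v (shapleyValue d v)) := by
  have hH : 2 * harm (d - 1) ≠ 0 := by have := harm_pos (n := d - 1) (by omega); positivity
  rw [hLoss_sub_hLoss_shapleyValue hd v φ heff, mul_inv_cancel_left₀ hH]
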